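/- arXiv:1804.03178 — 4 statements merged into one kernel-verified Lean document; each statement's English description precedes it below -/
import Mathlib

section
/- If the personalized pricing policy {(p_i*, q_i*)} maximizes U(r ∘ x) subject to x_i = 1[p_i + q_i r_i ≥ c_i] and Σ_i (p_i + q_i r_i) x_i ≤ B, then the induced participation vector x* with x*_i = 1[p_i* + q_i* r_i ≥ c_i] is an optimal solution of the 0-1 knapsack problem: maximize U(r ∘ x) over x ∈ {0,1}^n subject to Σ_i c_i x_i ≤ B. -/
open Finset

/-- If a personalized pricing policy is optimal for the OPP problem,
then the induced participation vector is optimal for the 0-1 knapsack problem. -/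
theorem stmt_0 {n : ℕ} (r c p q : Fin n → ℝ) (B : ℝ)
    (U : (Fin n → ℝ) → ℝ)
    (hr : ∀ i, r i ∈ Set.Icc (0:ℝ) 1) (hc : ∀ i, 0 ≤ c i) (hB : 0 ≤ B)
    (hUmono : ∀ a b : Fin n → ℝ, (∀ i, a i ≤ b i) → U a ≤ U b)
    (hUsymm : ∀ (σ : Equiv.Perm (Fin n)) (a : Fin n → ℝ), U (a ∘ σ) = U a)
    (hp : ∀ i, 0 ≤ p i) (hq : ∀ i, 0 ≤ q i)
    (hfeas : ∑ i, (p i + q i * r i) * (if c i ≤ p i + q i * r i then (1:ℝ) else 0) ≤ B)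
    (hopt : ∀ p' q' : Fin n → ℝ, (∀ i, 0 ≤ p' i) → (∀ i, 0 ≤ q' i) →
      (∑ i, (p' i + q' i * r i) * (if c i ≤ p' i + q' i * r i then (1:ℝ) else 0)) ≤ B →
      U (fun i => r i * (if c i ≤ p' i + q' i * r i then (1:ℝ) else 0)) ≤
        U (fun i => r i * (if c i ≤ p i + q i * r i then (1:ℝ) else 0))) :
    (∑ i, c i * (if c i ≤ p i + q i * r i then (1:ℝ) else 0)) ≤ B ∧
    ∀ x : Fin n → ℝ, (∀ i, x i = 0 ∨ x i = 1) → (∑ i, c i * x i) ≤ B →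
      U (fun i => r i * x i) ≤
        U (fun i => r i * (if c i ≤ p i + q i * r i then (1:ℝ) else 0)) := by
  constructor
  · refine le_trans (Finset.sum_le_sum ?_) hfeas
    intro i _
    by_cases h : c i ≤ p i + q i * r i
    · simp [h]
    · simp [h]
  · intro x hx hxB
    have hU1 : U (fun i => r i * x i) ≤
        U (fun i => r i * (if c i ≤ c i * x i + 0 * r i then (1:ℝ) else 0)) := by
      apply hUmono
      intro i
      have hr0 := (hr i).1
      apply mul_le_mul_of_nonneg_left _ hr0
      rcases hx i with h | h
      · simp [h]
        positivity
      · simp [h]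
    refine le_trans hU1 (hopt (fun i => c i * x i) (fun _ => 0)
      (fun i => by rcases hx i with h | h <;> simp [h, hc i]) (fun _ => le_refl 0) ?_)
    refine le_trans (Finset.sum_le_sum ?_) hxB
    intro i _
    rcases hx i with h | h
    · by_cases h2 : c i ≤ c i * x i + 0 * r i <;> simp [h, h2]
    · by_cases h2 : c i ≤ c i * x i + 0 * r i <;> simp [h, h2]
end

section
/- If x* ∈ {0,1}^n is an optimal solution of the 0-1 knapsack problem maximizing U(r ∘ x) subject to Σ_i c_i x_i ≤ B, then for any choice of p_i ∈ [0, c_i] for each i, the personalized pricing policy with payments (p_i x*_i, ((c_i − p_i)/r_i) x*_i) is an optimal solution of the optimal personalized pricing problem (it is feasible and attains the optimal utility). -/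
open Finset

/-- From an optimal knapsack solution x*, the personalized pricing
(p_i x*_i, ((c_i - p_i)/r_i) x*_i) is an optimal solution of the personalized
pricing problem: it is budget-feasible and attains the optimal utility. -/
theorem stmt_1 {n : ℕ} (r c : Fin n → ℝ) (B : ℝ) (xs p : Fin n → ℝ)
    (U : (Fin n → ℝ) → ℝ)
    (hr : ∀ i, 0 < r i ∧ r i ≤ 1) (hc : ∀ i, 0 ≤ c i) (hB : 0 ≤ B)
    (hUmono : ∀ a b : Fin n → ℝ, (∀ i, a i ≤ b i) → U a ≤ U b)
    (hUsymm : ∀ (σ : Equiv.Perm (Fin n)) (a : Fin n → ℝ), U (a ∘ σ) = U a)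
    (hx01 : ∀ i, xs i = 0 ∨ xs i = 1)
    (hxfeas : ∑ i, c i * xs i ≤ B)
    (hxopt : ∀ x : Fin n → ℝ, (∀ i, x i = 0 ∨ x i = 1) → (∑ i, c i * x i) ≤ B →
      U (fun i => r i * x i) ≤ U (fun i => r i * xs i))
    (hp : ∀ i, 0 ≤ p i ∧ p i ≤ c i) :
    let P : Fin n → ℝ := fun i => p i * xs i
    let Q : Fin n → ℝ := fun i => ((c i - p i) / r i) * xs i
    (∑ i, (P i + Q i * r i) * (if c i ≤ P i + Q i * r i then (1:ℝ) else 0)) ≤ B ∧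
    ∀ p' q' : Fin n → ℝ, (∀ i, 0 ≤ p' i) → (∀ i, 0 ≤ q' i) →
      (∑ i, (p' i + q' i * r i) * (if c i ≤ p' i + q' i * r i then (1:ℝ) else 0)) ≤ B →
      U (fun i => r i * (if c i ≤ p' i + q' i * r i then (1:ℝ) else 0)) ≤
        U (fun i => r i * (if c i ≤ P i + Q i * r i then (1:ℝ) else 0)) := by

  intro P Q
  have hkey : ∀ i, P i + Q i * r i = c i * xs i := by
    intro i
    have hri : r i ≠ 0 := ne_of_gt (hr i).1
    simp only [P, Q]
    field_simp
    ring
  have hchi01 : ∀ i, (if c i ≤ P i + Q i * r i then (1:ℝ) else 0) = 0 ∨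
      (if c i ≤ P i + Q i * r i then (1:ℝ) else 0) = 1 := by
    intro i; split <;> simp
  have hterm : ∀ i, (P i + Q i * r i) * (if c i ≤ P i + Q i * r i then (1:ℝ) else 0)
      = c i * xs i := by
    intro i
    rw [hkey i]
    rcases hx01 i with h | h
    · simp [h]
    · simp [h]
  have hcost : ∀ i, c i * (if c i ≤ P i + Q i * r i then (1:ℝ) else 0) = c i * xs i := by
    intro i
    rcases hx01 i with h | h
    · rw [hkey i] at *
      simp only [h, mul_zero]
      split
      · have : c i = 0 := le_antisymm (by linarith [hc i]) (hc i)
        simp [this]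
      · simp
    · rw [hkey i]
      simp [h]
  have hle : ∀ i, xs i ≤ (if c i ≤ P i + Q i * r i then (1:ℝ) else 0) := by
    intro i
    rcases hx01 i with h | h
    · rw [h]; split <;> norm_num
    · rw [h, hkey i, h]; simp
  have hUeq2 : U (fun i => r i * xs i) ≤
      U (fun i => r i * (if c i ≤ P i + Q i * r i then (1:ℝ) else 0)) := by
    apply hUmono
    intro i
    exact mul_le_mul_of_nonneg_left (hle i) (le_of_lt (hr i).1)
  constructor
  · calc ∑ i, (P i + Q i * r i) * (if c i ≤ P i + Q i * r i then (1:ℝ) else 0)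
        = ∑ i, c i * xs i := Finset.sum_congr rfl (fun i _ => hterm i)
      _ ≤ B := hxfeas
  · intro p' q' hp' hq' hfeas'
    set x' : Fin n → ℝ := fun i => if c i ≤ p' i + q' i * r i then (1:ℝ) else 0 with hx'
    have hx'01 : ∀ i, x' i = 0 ∨ x' i = 1 := by
      intro i; simp only [hx']; split <;> simp
    have hx'cost : ∑ i, c i * x' i ≤ B := by
      refine le_trans (Finset.sum_le_sum fun i _ => ?_) hfeas'
      simp only [hx']
      split
      · next h => simpa using h
      · simp
    exact le_trans (hxopt x' hx'01 hx'cost) hUeq2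
end

section
/- There always exists an optimal personalized pricing policy with zero bonus, i.e., with q_i = 0 for all i: namely, setting p_i = c_i x*_i and q_i = 0 where x* solves the corresponding 0-1 knapsack problem achieves the optimal personalized pricing utility. -/
open Finset

/-- There is always an optimal personalized pricing policy with zero
bonus: with x* an optimal knapsack solution, the pricing (c_i x*_i, 0) is
budget-feasible and attains the optimal personalized pricing utility. -/
theorem stmt_2 {n : ℕ} (r c : Fin n → ℝ) (B : ℝ) (xs : Fin n → ℝ)
    (U : (Fin n → ℝ) → ℝ)
    (hr : ∀ i, r i ∈ Set.Icc (0:ℝ) 1) (hc : ∀ i, 0 ≤ c i) (hB : 0 ≤ B)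
    (hUmono : ∀ a b : Fin n → ℝ, (∀ i, a i ≤ b i) → U a ≤ U b)
    (hUsymm : ∀ (σ : Equiv.Perm (Fin n)) (a : Fin n → ℝ), U (a ∘ σ) = U a)
    (hx01 : ∀ i, xs i = 0 ∨ xs i = 1)
    (hxfeas : ∑ i, c i * xs i ≤ B)
    (hxopt : ∀ x : Fin n → ℝ, (∀ i, x i = 0 ∨ x i = 1) → (∑ i, c i * x i) ≤ B →
      U (fun i => r i * x i) ≤ U (fun i => r i * xs i)) :
    let P : Fin n → ℝ := fun i => c i * xs i
    let Q : Fin n → ℝ := fun _ => (0:ℝ)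
    (∑ i, (P i + Q i * r i) * (if c i ≤ P i + Q i * r i then (1:ℝ) else 0)) ≤ B ∧
    ∀ p' q' : Fin n → ℝ, (∀ i, 0 ≤ p' i) → (∀ i, 0 ≤ q' i) →
      (∑ i, (p' i + q' i * r i) * (if c i ≤ p' i + q' i * r i then (1:ℝ) else 0)) ≤ B →
      U (fun i => r i * (if c i ≤ p' i + q' i * r i then (1:ℝ) else 0)) ≤
        U (fun i => r i * (if c i ≤ P i + Q i * r i then (1:ℝ) else 0)) := by
  intro P Q
  constructor
  · calc (∑ i, (P i + Q i * r i) * (if c i ≤ P i + Q i * r i then (1:ℝ) else 0))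
        ≤ ∑ i, c i * xs i := by
          apply Finset.sum_le_sum
          intro i _
          simp only [P, Q, zero_mul, add_zero]
          rcases hx01 i with h | h <;> simp [h] <;> split <;> nlinarith [hc i]
      _ ≤ B := hxfeas
  · intro p' q' hp hq hbud
    set x' : Fin n → ℝ := fun i => if c i ≤ p' i + q' i * r i then (1:ℝ) else 0 with hx'
    have hx'01 : ∀ i, x' i = 0 ∨ x' i = 1 := by
      intro i; simp only [x']; split <;> simp
    have hcost : ∑ i, c i * x' i ≤ B := by
      refine le_trans (Finset.sum_le_sum ?_) hbud
      intro i _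
      simp only [x']
      split
      · next h => simpa using h
      · simp
    have h1 : U (fun i => r i * x' i) ≤ U (fun i => r i * xs i) := hxopt x' hx'01 hcost
    have h2 : U (fun i => r i * xs i) ≤
        U (fun i => r i * (if c i ≤ P i + Q i * r i then (1:ℝ) else 0)) := by
      apply hUmono
      intro i
      simp only [P, Q, zero_mul, add_zero]
      rcases hx01 i with h | h
      · simp only [h, mul_zero]
        split
        · have := (hr i).1; nlinarith
        · simp
      · simp [h]
    exact h1.trans h2
end

section
/- Fix c > 0, ε ∈ [0,1), and n ≥ 2 divisible by 4. Consider n workers where workers 1..n/2 have profile (r, cost) = (ε, c), workers n/2+1..3n/4 have (1, 2c), and workers 3n/4+1..n have (2, 2c). Take additive utility U(r ∘ x) = Σ_i r_i x_i and budget B = (n+4)c/2. Then the optimal common pricing with zero bonus achieves utility at most (n/2)ε, while the common pricing (p,q) = (0,c) is budget-feasible and achieves utility at least n/2; hence the ratio of the optimal no-bonus common pricing utility to the optimal common pricing utility is at most ε. -/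
open Finset

lemma sum_if_lt (n k : ℕ) (hk : k ≤ n) (a b : ℝ) :
    ∑ i ∈ Finset.range n, (if i < k then a else b) = k * a + (n - k) * b := by
  rw [Finset.range_eq_Ico, ← Finset.sum_Ico_consecutive _ (Nat.zero_le k) hk]
  have h1 : ∑ i ∈ Finset.Ico 0 k, (if i < k then a else b) = (k : ℝ) * a := by
    rw [Finset.sum_congr rfl fun i hi => if_pos (Finset.mem_Ico.mp hi).2]
    simp [mul_comm]
  have h2 : ∑ i ∈ Finset.Ico k n, (if i < k then a else b) = ((n - k : ℕ) : ℝ) * b := by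
    rw [Finset.sum_congr rfl fun i hi => if_neg (Nat.not_lt.mpr (Finset.mem_Ico.mp hi).1)]
    simp [mul_comm]
  rw [h1, h2]; push_cast [hk]; ring

/-- the power-of-bonus example: with budget B = (n+4)c/2, any
feasible no-bonus common pricing has utility at most (n/2)ε, while the bonus-only
pricing (0, c) is feasible with utility at least n/2, so the no-bonus/with-bonus
utility ratio is at most ε. -/
theorem stmt_11 (n : ℕ) (c ε : ℝ) (hc : 0 < c) (hε0 : 0 ≤ ε) (hε1 : ε < 1)
    (hn2 : 2 ≤ n) (hn4 : 4 ∣ n) :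
    let qual : Fin n → ℝ :=
      fun i => if (i:ℕ) < n / 2 then ε else if (i:ℕ) < 3 * n / 4 then 1 else 2
    let cost : Fin n → ℝ := fun i => if (i:ℕ) < n / 2 then c else 2 * c
    let part : ℝ → ℝ → Fin n → ℝ :=
      fun p q i => if cost i ≤ p + q * qual i then 1 else 0
    let pay : ℝ → ℝ → ℝ := fun p q => ∑ i, (p + q * qual i) * part p q i
    let util : ℝ → ℝ → ℝ := fun p q => ∑ i, qual i * part p q i
    let B : ℝ := ((n : ℝ) + 4) * c / 2
    (∀ p : ℝ, 0 ≤ p → pay p 0 ≤ B → util p 0 ≤ ((n : ℝ) / 2) * ε) ∧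
    (pay 0 c ≤ B ∧ (n : ℝ) / 2 ≤ util 0 c) ∧
    (∀ p : ℝ, 0 ≤ p → pay p 0 ≤ B → util p 0 ≤ ε * util 0 c) := by
  intro qual cost part pay util B
  obtain ⟨m, rfl⟩ := hn4
  have hm : 1 ≤ m := by omega
  have hm' : (1 : ℝ) ≤ (m : ℕ) := by exact_mod_cast hm
  have h2m : 4 * m / 2 = 2 * m := by omega
  have h3m : 3 * (4 * m) / 4 = 3 * m := by omega
  -- the summand of util 0 c
  have key : ∀ i : Fin (4 * m), qual i * part 0 c i =
      if (i:ℕ) < 3 * m then (0:ℝ) else 2 := by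
    intro i
    simp only [qual, cost, part, h2m, h3m, zero_add]
    by_cases h1 : (i:ℕ) < 2 * m
    · have h3 : (i:ℕ) < 3 * m := by omega
      simp only [if_pos h1, if_pos h3]
      rw [if_neg (by nlinarith)]
      ring
    · simp only [if_neg h1]
      by_cases h3 : (i:ℕ) < 3 * m
      · simp only [if_pos h3]
        rw [if_neg (by nlinarith)]
        ring
      · simp only [if_neg h3]
        rw [if_pos (by nlinarith)]
        ring
  have hutil0c : util 0 c = 2 * m := by
    show (∑ i : Fin (4 * m), qual i * part 0 c i) = 2 * m
    rw [Finset.sum_congr rfl fun i _ => key i,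
      Fin.sum_univ_eq_sum_range (fun j => if j < 3 * m then (0:ℝ) else 2),
      sum_if_lt _ _ (by omega)]
    push_cast; ring
  have hutilB : ((4 * m : ℕ) : ℝ) / 2 ≤ util 0 c := by
    rw [hutil0c]; push_cast; ring_nf; norm_num
  have hpay0c : pay 0 c ≤ B := by
    have hpc : pay 0 c = c * util 0 c := by
      show (∑ i : Fin (4 * m), (0 + c * qual i) * part 0 c i)
          = c * ∑ i : Fin (4 * m), qual i * part 0 c i
      rw [Finset.mul_sum]
      exact Finset.sum_congr rfl fun i _ => by ring
    rw [hpc, hutil0c]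
    show c * (2 * (m:ℕ)) ≤ (((4 * m : ℕ) : ℝ) + 4) * c / 2
    push_cast; nlinarith
  -- no-bonus bound
  have hnb : ∀ p : ℝ, 0 ≤ p → pay p 0 ≤ B → util p 0 ≤ (((4 * m : ℕ) : ℝ) / 2) * ε := by
    intro p hp hpayB
    rcases lt_or_ge p c with hpc | hcp
    · -- nobody participates
      have hz : ∀ i : Fin (4 * m), qual i * part p 0 i = 0 := by
        intro i
        simp only [qual, cost, part, h2m, h3m, zero_mul, add_zero]
        by_cases h1 : (i:ℕ) < 2 * m
        · simp only [if_pos h1]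
          rw [if_neg (show ¬ c ≤ p by linarith), mul_zero]
        · simp only [if_neg h1]
          rw [if_neg (show ¬ 2 * c ≤ p by linarith), mul_zero]
      have : util p 0 = 0 := by
        show (∑ i : Fin (4 * m), qual i * part p 0 i) = 0
        rw [Finset.sum_congr rfl fun i _ => hz i, Finset.sum_const_zero]
      rw [this]; positivity
    · rcases lt_or_ge p (2 * c) with hp2 | hp2
      · -- only cheap workers participate
        have hz : ∀ i : Fin (4 * m), qual i * part p 0 i =
            if (i:ℕ) < 2 * m then ε else 0 := by
          intro i
          simp only [qual, cost, part, h2m, h3m, zero_mul, add_zero]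
          by_cases h1 : (i:ℕ) < 2 * m
          · simp only [if_pos h1]
            rw [if_pos hcp]; ring
          · simp only [if_neg h1]
            rw [if_neg (show ¬ 2 * c ≤ p by linarith), mul_zero]
        have : util p 0 = 2 * m * ε := by
          show (∑ i : Fin (4 * m), qual i * part p 0 i) = 2 * m * ε
          rw [Finset.sum_congr rfl fun i _ => hz i,
            Fin.sum_univ_eq_sum_range (fun j => if j < 2 * m then ε else (0:ℝ)),
            sum_if_lt _ _ (by omega)]
          push_cast; ring
        rw [this]; push_cast; nlinarith
      · -- everyone participates: budget violated
        exfalso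
        have hz : ∀ i : Fin (4 * m), (p + 0 * qual i) * part p 0 i = p := by
          intro i
          simp only [qual, cost, part, h2m, h3m, zero_mul, add_zero]
          by_cases h1 : (i:ℕ) < 2 * m
          · simp only [if_pos h1]
            rw [if_pos (show c ≤ p by linarith), mul_one]
          · simp only [if_neg h1]
            rw [if_pos (show 2 * c ≤ p by linarith), mul_one]
        have hpaye : pay p 0 = (4 * m : ℕ) * p := by
          show (∑ i : Fin (4 * m), (p + 0 * qual i) * part p 0 i) = (4 * m : ℕ) * p
          rw [Finset.sum_congr rfl fun i _ => hz i, Finset.sum_const, Finset.card_univ,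
            Fintype.card_fin, nsmul_eq_mul]
        have hB : pay p 0 ≤ (((4 * m : ℕ) : ℝ) + 4) * c / 2 := hpayB
        rw [hpaye] at hB
        push_cast at hB
        nlinarith
  refine ⟨hnb, ⟨hpay0c, hutilB⟩, fun p hp hpayB => ?_⟩
  calc util p 0 ≤ (((4 * m : ℕ) : ℝ) / 2) * ε := hnb p hp hpayB
    _ = ε * (((4 * m : ℕ) : ℝ) / 2) := by ring
    _ ≤ ε * util 0 c := by
        apply mul_le_mul_of_nonneg_left hutilB hε0
end
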